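/- Let x = (X₁,Y₁,X₂,Y₂) ∈ ℂ⁴ satisfy X₁ ≠ X₂, Y₁² = Q(X₁) and Y₂² = Q(X₂). Then, with u₂, u₄, u₅, u₇ regarded as functions on the open set {X₁ ≠ X₂} ⊂ ℂ⁴, the following hold at x: (𝓛₅*u₂)(x) = u₂u₅ − u₇ evaluated at x; (𝓛₅*u₄)(x) = 2(u₂u₇ − u₄u₅) evaluated at x; (𝓛₅*u₅)(x) = u₅² + 14u₂⁵ − 28u₂³u₄ − 18u₂u₄² − 8y₄u₂u₄ + 2y₆(u₂² + u₄) − 2y₈u₂ + y₁₀ evaluated at x; (𝓛₅*u₇)(x) = −u₅u₇ + 21u₂⁶ + 35u₂⁴u₄ − 21u₂²u₄² − 3u₄³ + 2y₄(5u₂⁴ − u₄²) − 2y₆(3u₂³ − u₂u₄) + y₈(3u₂² − u₄) − y₁₀u₂ evaluated at x. -/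

import Mathlib

/- Context: ℂ⁴ is modelled as `Fin 4 → ℂ` with coordinates 0 ↦ X₁, 1 ↦ Y₁, 2 ↦ X₂,
3 ↦ Y₂.  `pd i f x` is the complex partial derivative of `f` along the `i`-th
coordinate direction.  Q(X) = X⁷ + y₄X⁵ − y₆X⁴ + y₈X³ − y₁₀X² + y₁₂X − y₁₄,
Q'(X) = 7X⁶ + 5y₄X⁴ − 4y₆X³ + 3y₈X² − 2y₁₀X + y₁₂. -/

noncomputable section

/-- Complex partial derivative along the `i`-th coordinate direction. -/
def pd (i : Fin 4) (f : (Fin 4 → ℂ) → ℂ) (x : Fin 4 → ℂ) : ℂ :=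
  fderiv ℂ f x (Pi.single i 1)

def Qf (y4 y6 y8 y10 y12 y14 X : ℂ) : ℂ :=
  X ^ 7 + y4 * X ^ 5 - y6 * X ^ 4 + y8 * X ^ 3 - y10 * X ^ 2 + y12 * X - y14

def Qd (y4 y6 y8 y10 y12 X : ℂ) : ℂ :=
  7 * X ^ 6 + 5 * y4 * X ^ 4 - 4 * y6 * X ^ 3 + 3 * y8 * X ^ 2 - 2 * y10 * X + y12

/-- `D₁ f = 2Y₁·∂f/∂X₁ + Q'(X₁)·∂f/∂Y₁`. -/
def D1 (y4 y6 y8 y10 y12 : ℂ) (f : (Fin 4 → ℂ) → ℂ) (x : Fin 4 → ℂ) : ℂ :=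
  2 * x 1 * pd 0 f x + Qd y4 y6 y8 y10 y12 (x 0) * pd 1 f x

/-- `D₂ f = 2Y₂·∂f/∂X₂ + Q'(X₂)·∂f/∂Y₂`. -/
def D2 (y4 y6 y8 y10 y12 : ℂ) (f : (Fin 4 → ℂ) → ℂ) (x : Fin 4 → ℂ) : ℂ :=
  2 * x 3 * pd 2 f x + Qd y4 y6 y8 y10 y12 (x 2) * pd 3 f x

/-- `𝓛₅* f = (X₂·D₁f − X₁·D₂f)/(X₁ − X₂)`. -/
def L5 (y4 y6 y8 y10 y12 : ℂ) (f : (Fin 4 → ℂ) → ℂ) (x : Fin 4 → ℂ) : ℂ :=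
  (x 2 * D1 y4 y6 y8 y10 y12 f x - x 0 * D2 y4 y6 y8 y10 y12 f x) / (x 0 - x 2)

def u2f (x : Fin 4 → ℂ) : ℂ := (x 0 + x 2) / 2
def u4f (x : Fin 4 → ℂ) : ℂ := (x 0 - x 2) ^ 2 / 4
def u5f (x : Fin 4 → ℂ) : ℂ := (x 1 - x 3) / (x 0 - x 2)
def u7f (x : Fin 4 → ℂ) : ℂ := (x 1 + x 3) / 2

/- Apart from the differentials of these rational functions, the only input is the relation
`Y₁² − Y₂² = Q(X₁) − Q(X₂)`: modulo it, `𝓛₅* u₅ − u₅²` and `𝓛₅* u₇ + u₅ u₇` no longer depend on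
`Y₁, Y₂`, and both formulas become polynomial identities in `X₁, X₂` once the powers of
`X₁ − X₂` are cleared. -/

open ContinuousLinearMap (proj)

section

variable {x : Fin 4 → ℂ}

local notation "dX₁" => (proj 0 : (Fin 4 → ℂ) →L[ℂ] ℂ)
local notation "dY₁" => (proj 1 : (Fin 4 → ℂ) →L[ℂ] ℂ)
local notation "dX₂" => (proj 2 : (Fin 4 → ℂ) →L[ℂ] ℂ)
local notation "dY₂" => (proj 3 : (Fin 4 → ℂ) →L[ℂ] ℂ)

theorem hasFDerivAt_coord (i : Fin 4) :
    HasFDerivAt (fun y : Fin 4 → ℂ => y i) (proj (R := ℂ) i) x :=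
  hasFDerivAt_apply i x

theorem hasFDerivAt_u2f : HasFDerivAt u2f ((2 : ℂ)⁻¹ • (dX₁ + dX₂)) x := by
  rw [show u2f = fun y => (y 0 + y 2) * (2 : ℂ)⁻¹ from funext fun y => div_eq_mul_inv _ _]
  exact ((hasFDerivAt_coord 0).add (hasFDerivAt_coord 2)).mul_const _

theorem hasFDerivAt_u4f : HasFDerivAt u4f (((x 0 - x 2) / 2) • (dX₁ - dX₂)) x := by
  rw [show u4f = fun y => (y 0 - y 2) ^ 2 * (4 : ℂ)⁻¹ from funext fun y => div_eq_mul_inv _ _]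
  refine ((((hasFDerivAt_coord 0).sub (hasFDerivAt_coord 2)).pow 2).mul_const _).congr_fderiv ?_
  ext v
  simp only [Pi.sub_apply, Nat.add_one_sub_one, pow_one, nsmul_eq_mul, Nat.cast_ofNat, smul_apply,
    sub_apply, ContinuousLinearMap.proj_apply, smul_eq_mul]
  ring

theorem hasFDerivAt_u5f (hx : x 0 ≠ x 2) :
    HasFDerivAt u5f ((x 0 - x 2)⁻¹ • (dY₁ - dY₂ - u5f x • (dX₁ - dX₂))) x := by
  have hinv := (hasDerivAt_inv (sub_ne_zero.mpr hx)).comp_hasFDerivAt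
    (f := fun y : Fin 4 → ℂ => y 0 - y 2) x ((hasFDerivAt_coord 0).sub (hasFDerivAt_coord 2))
  rw [show u5f = fun y => (y 1 - y 3) * (y 0 - y 2)⁻¹ from funext fun y => div_eq_mul_inv _ _]
  refine (((hasFDerivAt_coord 1).sub (hasFDerivAt_coord 3)).mul hinv).congr_fderiv ?_
  ext v
  simp only [Pi.sub_apply, Function.comp_apply, add_apply, smul_apply, sub_apply,
    ContinuousLinearMap.proj_apply, smul_eq_mul]
  field_simp
  ring

theorem hasFDerivAt_u7f : HasFDerivAt u7f ((2 : ℂ)⁻¹ • (dY₁ + dY₂)) x := by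
  rw [show u7f = fun y => (y 1 + y 3) * (2 : ℂ)⁻¹ from funext fun y => div_eq_mul_inv _ _]
  exact ((hasFDerivAt_coord 1).add (hasFDerivAt_coord 3)).mul_const _

variable {y4 y6 y8 y10 y12 : ℂ}

theorem L5_eq_of_hasFDerivAt {f : (Fin 4 → ℂ) → ℂ} {L : (Fin 4 → ℂ) →L[ℂ] ℂ}
    (h : HasFDerivAt f L x) : L5 y4 y6 y8 y10 y12 f x =
      (x 2 * (2 * x 1 * L (Pi.single 0 1) + Qd y4 y6 y8 y10 y12 (x 0) * L (Pi.single 1 1))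
        - x 0 * (2 * x 3 * L (Pi.single 2 1) + Qd y4 y6 y8 y10 y12 (x 2) * L (Pi.single 3 1)))
        / (x 0 - x 2) := by
  rw [L5, D1, D2, pd, pd, pd, pd, h.fderiv]

theorem L5_u2f (hx : x 0 ≠ x 2) : L5 y4 y6 y8 y10 y12 u2f x = u2f x * u5f x - u7f x := by
  have hd : x 0 - x 2 ≠ 0 := sub_ne_zero.mpr hx
  rw [L5_eq_of_hasFDerivAt hasFDerivAt_u2f]
  simp only [add_apply, smul_apply, ContinuousLinearMap.proj_apply, Pi.single_apply, smul_eq_mul,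
    Fin.reduceEq, ↓reduceIte, u2f, u5f, u7f]
  field_simp
  ring

theorem L5_u4f (hx : x 0 ≠ x 2) :
    L5 y4 y6 y8 y10 y12 u4f x = 2 * (u2f x * u7f x - u4f x * u5f x) := by
  have hd : x 0 - x 2 ≠ 0 := sub_ne_zero.mpr hx
  rw [L5_eq_of_hasFDerivAt hasFDerivAt_u4f]
  simp only [sub_apply, smul_apply, ContinuousLinearMap.proj_apply, Pi.single_apply, smul_eq_mul,
    Fin.reduceEq, ↓reduceIte, u2f, u4f, u5f, u7f]
  field_simp
  ring

theorem L5_u5f {y14 : ℂ} (hx : x 0 ≠ x 2)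
    (hQ : x 1 ^ 2 - x 3 ^ 2 = Qf y4 y6 y8 y10 y12 y14 (x 0) - Qf y4 y6 y8 y10 y12 y14 (x 2)) :
    L5 y4 y6 y8 y10 y12 u5f x =
      (u5f x) ^ 2 + 14 * (u2f x) ^ 5 - 28 * (u2f x) ^ 3 * u4f x
        - 18 * u2f x * (u4f x) ^ 2 - 8 * y4 * u2f x * u4f x
        + 2 * y6 * ((u2f x) ^ 2 + u4f x) - 2 * y8 * u2f x + y10 := by
  have hd : x 0 - x 2 ≠ 0 := sub_ne_zero.mpr hx
  rw [L5_eq_of_hasFDerivAt (hasFDerivAt_u5f hx)]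
  linear_combination (norm := skip) (-(x 0 + x 2) / (x 0 - x 2) ^ 3) * hQ
  simp only [sub_apply, smul_apply, ContinuousLinearMap.proj_apply, Pi.single_apply, smul_eq_mul,
    Fin.reduceEq, ↓reduceIte, u2f, u4f, u5f, Qd, Qf]
  field_simp
  ring

theorem L5_u7f {y14 : ℂ} (hx : x 0 ≠ x 2)
    (hQ : x 1 ^ 2 - x 3 ^ 2 = Qf y4 y6 y8 y10 y12 y14 (x 0) - Qf y4 y6 y8 y10 y12 y14 (x 2)) :
    L5 y4 y6 y8 y10 y12 u7f x =
      -(u5f x) * u7f x + 21 * (u2f x) ^ 6 + 35 * (u2f x) ^ 4 * u4f x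
        - 21 * (u2f x) ^ 2 * (u4f x) ^ 2 - 3 * (u4f x) ^ 3
        + 2 * y4 * (5 * (u2f x) ^ 4 - (u4f x) ^ 2)
        - 2 * y6 * (3 * (u2f x) ^ 3 - u2f x * u4f x)
        + y8 * (3 * (u2f x) ^ 2 - u4f x) - y10 * u2f x := by
  have hd : x 0 - x 2 ≠ 0 := sub_ne_zero.mpr hx
  rw [L5_eq_of_hasFDerivAt hasFDerivAt_u7f]
  linear_combination (norm := skip) (2 * (x 0 - x 2))⁻¹ * hQ
  simp only [add_apply, smul_apply, ContinuousLinearMap.proj_apply, Pi.single_apply, smul_eq_mul,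
    Fin.reduceEq, ↓reduceIte, u2f, u4f, u5f, u7f, Qd, Qf]
  field_simp
  ring

end

/-- At any point of the curve-square with `X₁ ≠ X₂`, the derivation `𝓛₅*` acts on
`u₂, u₄, u₅, u₇` by the stated polynomial formulas. -/
theorem statement10 (y4 y6 y8 y10 y12 y14 : ℂ) (x : Fin 4 → ℂ)
    (hx : x 0 ≠ x 2)
    (h1 : (x 1) ^ 2 = Qf y4 y6 y8 y10 y12 y14 (x 0))
    (h2 : (x 3) ^ 2 = Qf y4 y6 y8 y10 y12 y14 (x 2)) :
    L5 y4 y6 y8 y10 y12 u2f x = u2f x * u5f x - u7f x ∧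
    L5 y4 y6 y8 y10 y12 u4f x = 2 * (u2f x * u7f x - u4f x * u5f x) ∧
    L5 y4 y6 y8 y10 y12 u5f x =
      (u5f x) ^ 2 + 14 * (u2f x) ^ 5 - 28 * (u2f x) ^ 3 * u4f x
        - 18 * u2f x * (u4f x) ^ 2 - 8 * y4 * u2f x * u4f x
        + 2 * y6 * ((u2f x) ^ 2 + u4f x) - 2 * y8 * u2f x + y10 ∧
    L5 y4 y6 y8 y10 y12 u7f x =
      -(u5f x) * u7f x + 21 * (u2f x) ^ 6 + 35 * (u2f x) ^ 4 * u4f x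
        - 21 * (u2f x) ^ 2 * (u4f x) ^ 2 - 3 * (u4f x) ^ 3
        + 2 * y4 * (5 * (u2f x) ^ 4 - (u4f x) ^ 2)
        - 2 * y6 * (3 * (u2f x) ^ 3 - u2f x * u4f x)
        + y8 * (3 * (u2f x) ^ 2 - u4f x) - y10 * u2f x := by
  have hQ : x 1 ^ 2 - x 3 ^ 2 =
      Qf y4 y6 y8 y10 y12 y14 (x 0) - Qf y4 y6 y8 y10 y12 y14 (x 2) := by
    rw [h1, h2]
  exact ⟨L5_u2f hx, L5_u4f hx, L5_u5f hx hQ, L5_u7f hx hQ⟩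

end
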